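/- Conversely to the penalized PCA-covariance equivalence: if L̂ minimizes (1/2) d_*(X^T X, L L^T)^2 + Σ_k P_k(l_k) over L ∈ ℝ^{P×K}, and Ẑ := Polar.U(X L̂), then (Ẑ, L̂) minimizes (1/2)||X - Z L^T||_F^2 + Σ_k P_k(l_k) over all Z with Z^T Z = I_K and L ∈ ℝ^{P×K}. -/

import Mathlib

/-!
For `Zᵀ Z = 1`, `‖X - Z Lᵀ‖²_F = tr XᵀX + tr L Lᵀ - 2 tr (Zᵀ X L)`, and Cauchy–Schwarz in an
eigenbasis of `BᵀB` gives `tr (Zᵀ B) ≤ tr √(BᵀB)`, with equality when `Z` is the polar factor of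
`B`. Since `CᵀC` and `C Cᵀ` have the same nonzero spectrum, `tr √(S L Lᵀ S) = tr √((X L)ᵀ (X L))`
for `S = √(XᵀX)`, so `d_*(XᵀX, L Lᵀ)² = min_Z ‖X - Z Lᵀ‖²_F`: the PCA criterion dominates the
Bures–Wasserstein one, and the two agree at `(Ẑ, L̂)`.
-/

open Matrix

noncomputable def frobSq {n p : ℕ} (A : Matrix (Fin n) (Fin p) ℝ) : ℝ := ∑ i, ∑ j, (A i j)^2

open Classical in
/-- The unique positive semidefinite square root of a PSD matrix (junk value `0` otherwise). -/
noncomputable def msqrt {p : ℕ} (M : Matrix (Fin p) (Fin p) ℝ) : Matrix (Fin p) (Fin p) ℝ :=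
  if h : M.PosSemidef then
    (h.1.eigenvectorUnitary : Matrix (Fin p) (Fin p) ℝ) *
      Matrix.diagonal (Real.sqrt ∘ h.1.eigenvalues) *
      (star h.1.eigenvectorUnitary : Matrix (Fin p) (Fin p) ℝ)
  else 0

/-- Squared Bures-Wasserstein distance. -/
noncomputable def BWsq {p : ℕ} (A B : Matrix (Fin p) (Fin p) ℝ) : ℝ :=
  A.trace - 2 * (msqrt (msqrt A * B * msqrt A)).trace + B.trace

lemma posSemidef_transpose_mul_self {m n : Type*} [Fintype m] [Fintype n] (A : Matrix m n ℝ) :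
    (Aᵀ * A).PosSemidef := by
  simpa using posSemidef_conjTranspose_mul_self A

lemma posSemidef_mul_diagonal_mul_transpose {m n : Type*} [Fintype m] [Fintype n] [DecidableEq n]
    (Q : Matrix m n ℝ) {e : n → ℝ} (he : ∀ i, 0 ≤ e i) :
    (Q * diagonal e * Qᵀ).PosSemidef := by
  simpa using (posSemidef_diagonal_iff.mpr he).mul_mul_conjTranspose_same Q

lemma Matrix.PosSemidef.transpose_eq {m : Type*} [Fintype m] {M : Matrix m m ℝ}
    (hM : M.PosSemidef) : Mᵀ = M := by
  simpa using hM.isHermitian.eq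

section msqrt

variable {p : ℕ} {M : Matrix (Fin p) (Fin p) ℝ}

open scoped MatrixOrder

lemma msqrt_eq_cfcSqrt (hM : M.PosSemidef) : msqrt M = CFC.sqrt M := by
  rw [msqrt, dif_pos hM, CFC.sqrt_eq_real_sqrt M hM.nonneg, cfcₙ_eq_cfc, hM.isHermitian.cfc_eq]
  simp [IsHermitian.cfc, Unitary.conjStarAlgAut_apply, Function.comp_def]

lemma msqrt_eq_of_mul_self_eq {R : Matrix (Fin p) (Fin p) ℝ} (hR : R.PosSemidef)
    (hRM : R * R = M) : msqrt M = R := by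
  have hM : M.PosSemidef := hRM ▸ sq R ▸ hR.pow 2
  rw [msqrt_eq_cfcSqrt hM]
  exact CFC.sqrt_unique hRM hR.nonneg

lemma posSemidef_msqrt (hM : M.PosSemidef) : (msqrt M).PosSemidef := by
  rw [msqrt_eq_cfcSqrt hM]
  exact nonneg_iff_posSemidef.mp (CFC.sqrt_nonneg M)

lemma msqrt_mul_msqrt (hM : M.PosSemidef) : msqrt M * msqrt M = M := by
  rw [msqrt_eq_cfcSqrt hM]
  exact CFC.sqrt_mul_sqrt_self M hM.nonneg

lemma Matrix.PosSemidef.exists_orthogonal_diagonalization (hM : M.PosSemidef) :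
    ∃ (Q : Matrix (Fin p) (Fin p) ℝ) (e : Fin p → ℝ),
      (∀ i, 0 ≤ e i) ∧ Qᵀ * Q = 1 ∧ M = Q * diagonal e * Qᵀ := by
  have hQ := hM.isHermitian.eigenvectorUnitary.2
  refine ⟨hM.isHermitian.eigenvectorUnitary, hM.isHermitian.eigenvalues, hM.eigenvalues_nonneg,
    ?_, ?_⟩
  · rw [← conjTranspose_eq_transpose_of_trivial, ← star_eq_conjTranspose]
    exact mem_unitaryGroup_iff'.mp hQ
  · simpa [star_eq_conjTranspose] using hM.isHermitian.spectral_theorem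

lemma trace_msqrt_mul_diagonal_mul_transpose {Q : Matrix (Fin p) (Fin p) ℝ} {e : Fin p → ℝ}
    (he : ∀ i, 0 ≤ e i) (hQ : Qᵀ * Q = 1) :
    (msqrt (Q * diagonal e * Qᵀ)).trace = ∑ i, √(e i) := by
  have hsqrt : msqrt (Q * diagonal e * Qᵀ) = Q * diagonal (fun i => √(e i)) * Qᵀ := by
    refine msqrt_eq_of_mul_self_eq
      (posSemidef_mul_diagonal_mul_transpose Q fun i => Real.sqrt_nonneg _) ?_
    calc Q * diagonal (fun i => √(e i)) * Qᵀ * (Q * diagonal (fun i => √(e i)) * Qᵀ)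
        = Q * (diagonal (fun i => √(e i)) * (Qᵀ * Q) * diagonal (fun i => √(e i))) * Qᵀ := by
          simp only [Matrix.mul_assoc]
      _ = Q * diagonal e * Qᵀ := by
          simp [hQ, diagonal_mul_diagonal, Real.mul_self_sqrt (he _)]
  rw [hsqrt, trace_mul_cycle, hQ, Matrix.one_mul, trace_diagonal]

end msqrt

lemma trace_transpose_mul_le_sum_sqrt {m n : Type*} [Fintype m] [Fintype n]
    (A B : Matrix m n ℝ) :
    (Aᵀ * B).trace ≤ ∑ i, √((Aᵀ * A) i i) * √((Bᵀ * B) i i) := by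
  simp only [trace, diag, mul_apply, transpose_apply, ← sq]
  exact Finset.sum_le_sum fun i _ =>
    Real.sum_mul_le_sqrt_mul_sqrt _ (fun a => A a i) (fun a => B a i)

lemma trace_transpose_mul_le_trace_msqrt {n k : ℕ} {Z : Matrix (Fin n) (Fin k) ℝ}
    (hZ : Zᵀ * Z = 1) (B : Matrix (Fin n) (Fin k) ℝ) :
    (Zᵀ * B).trace ≤ (msqrt (Bᵀ * B)).trace := by
  obtain ⟨Q, e, he, hQ, hBQ⟩ := (posSemidef_transpose_mul_self B).exists_orthogonal_diagonalization
  have hQ' : Q * Qᵀ = 1 := mul_eq_one_comm.mp hQ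
  have hZQ : (Z * Q)ᵀ * (Z * Q) = 1 := by
    rw [transpose_mul, Matrix.mul_assoc, ← Matrix.mul_assoc Zᵀ, hZ, Matrix.one_mul, hQ]
  have hBQ' : (B * Q)ᵀ * (B * Q) = diagonal e := by
    rw [transpose_mul, Matrix.mul_assoc, ← Matrix.mul_assoc Bᵀ, hBQ]
    simp only [Matrix.mul_assoc, hQ, Matrix.mul_one]
    rw [← Matrix.mul_assoc, hQ, Matrix.one_mul]
  calc (Zᵀ * B).trace = ((Z * Q)ᵀ * (B * Q)).trace := by
        rw [transpose_mul, Matrix.mul_assoc, trace_mul_comm Qᵀ]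
        simp only [Matrix.mul_assoc, hQ', Matrix.mul_one]
    _ ≤ ∑ i, √(((Z * Q)ᵀ * (Z * Q)) i i) * √(((B * Q)ᵀ * (B * Q)) i i) :=
        trace_transpose_mul_le_sum_sqrt _ _
    _ = (msqrt (Bᵀ * B)).trace := by
        rw [hZQ, hBQ', hBQ, trace_msqrt_mul_diagonal_mul_transpose he hQ]
        simp

lemma transpose_mul_self_apply_self_eq_zero {m n : Type*} [Fintype m] {W : Matrix m n ℝ} {i : n}
    (hW : (Wᵀ * W) i i = 0) (a : m) : W a i = 0 := by
  simp only [mul_apply, transpose_apply] at hW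
  exact mul_self_eq_zero.mp <|
    (Finset.sum_eq_zero_iff_of_nonneg fun a _ => mul_self_nonneg (W a i)).mp hW a
      (Finset.mem_univ a)

lemma msqrt_mul_transpose_of_transpose_mul_eq_diagonal {p k : ℕ} {W : Matrix (Fin p) (Fin k) ℝ}
    {e : Fin k → ℝ} (he : ∀ i, 0 ≤ e i) (hW : Wᵀ * W = diagonal e) :
    msqrt (W * Wᵀ) = W * diagonal (fun i => (√(e i))⁻¹) * Wᵀ := by
  set g : Fin k → ℝ := fun i => (√(e i))⁻¹
  -- `g i e i g i = 1` if `e i ≠ 0`; otherwise `(√0)⁻¹ = 0` and column `i` of `W` vanishes.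
  have hWg : W * diagonal (fun i => g i * e i * g i) = W := by
    ext a i
    rw [mul_diagonal]
    rcases (he i).eq_or_lt with hei | hei
    · rw [transpose_mul_self_apply_self_eq_zero (W := W) (i := i) (by simp [hW, ← hei]) a, zero_mul]
    · have : √(e i) ≠ 0 := (Real.sqrt_pos.mpr hei).ne'
      simp only [g]
      field_simp
      rw [Real.sq_sqrt (he i)]
  refine msqrt_eq_of_mul_self_eq
    (posSemidef_mul_diagonal_mul_transpose W fun i => inv_nonneg.mpr (Real.sqrt_nonneg _)) ?_
  calc W * diagonal g * Wᵀ * (W * diagonal g * Wᵀ)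
      = W * (diagonal g * (Wᵀ * W) * diagonal g) * Wᵀ := by simp only [Matrix.mul_assoc]
    _ = W * Wᵀ := by rw [hW, diagonal_mul_diagonal, diagonal_mul_diagonal, hWg]

lemma trace_msqrt_transpose_mul_self {p k : ℕ} (C : Matrix (Fin p) (Fin k) ℝ) :
    (msqrt (Cᵀ * C)).trace = (msqrt (C * Cᵀ)).trace := by
  obtain ⟨Q, e, he, hQ, hCQ⟩ := (posSemidef_transpose_mul_self C).exists_orthogonal_diagonalization
  have hQ' : Q * Qᵀ = 1 := mul_eq_one_comm.mp hQ
  have hW : (C * Q)ᵀ * (C * Q) = diagonal e := by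
    rw [transpose_mul, Matrix.mul_assoc, ← Matrix.mul_assoc Cᵀ, hCQ]
    simp only [Matrix.mul_assoc, hQ, Matrix.mul_one]
    rw [← Matrix.mul_assoc, hQ, Matrix.one_mul]
  have hWW : C * Q * (C * Q)ᵀ = C * Cᵀ := by
    rw [transpose_mul, Matrix.mul_assoc, ← Matrix.mul_assoc Q, hQ', Matrix.one_mul]
  rw [hCQ, trace_msqrt_mul_diagonal_mul_transpose he hQ, ← hWW,
    msqrt_mul_transpose_of_transpose_mul_eq_diagonal he hW, trace_mul_cycle, hW,
    diagonal_mul_diagonal, trace_diagonal]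
  exact Finset.sum_congr rfl fun i _ => by rw [← div_eq_mul_inv, Real.div_sqrt]

lemma frobSq_eq_trace {n p : ℕ} (A : Matrix (Fin n) (Fin p) ℝ) : frobSq A = (Aᵀ * A).trace := by
  simp only [frobSq, trace, diag, mul_apply, transpose_apply, sq]
  exact Finset.sum_comm

lemma frobSq_sub_mul_transpose {n p k : ℕ} (X : Matrix (Fin n) (Fin p) ℝ)
    {Z : Matrix (Fin n) (Fin k) ℝ} (hZ : Zᵀ * Z = 1) (L : Matrix (Fin p) (Fin k) ℝ) :
    frobSq (X - Z * Lᵀ) = (Xᵀ * X).trace + (L * Lᵀ).trace - 2 * (Zᵀ * (X * L)).trace := by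
  have hcross : (L * Zᵀ * X).trace = (Zᵀ * (X * L)).trace := by
    rw [Matrix.mul_assoc, trace_mul_comm, Matrix.mul_assoc]
  have hcross' : (Xᵀ * (Z * Lᵀ)).trace = (Zᵀ * (X * L)).trace := by
    rw [← trace_transpose, transpose_mul, transpose_mul, transpose_transpose, transpose_transpose,
      hcross]
  have hsquare : (L * Zᵀ * (Z * Lᵀ)).trace = (L * Lᵀ).trace := by
    rw [Matrix.mul_assoc, ← Matrix.mul_assoc Zᵀ, hZ, Matrix.one_mul]
  rw [frobSq_eq_trace, transpose_sub, transpose_mul, transpose_transpose, Matrix.sub_mul,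
    Matrix.mul_sub, Matrix.mul_sub, trace_sub, trace_sub, trace_sub, hcross, hcross', hsquare]
  ring

lemma BWsq_transpose_mul_self {n p k : ℕ} (X : Matrix (Fin n) (Fin p) ℝ)
    (L : Matrix (Fin p) (Fin k) ℝ) :
    BWsq (Xᵀ * X) (L * Lᵀ)
      = (Xᵀ * X).trace + (L * Lᵀ).trace - 2 * (msqrt ((X * L)ᵀ * (X * L))).trace := by
  have hX := posSemidef_transpose_mul_self X
  set S := msqrt (Xᵀ * X)
  have hSt : Sᵀ = S := (posSemidef_msqrt hX).transpose_eq
  have hcomm : (msqrt (S * (L * Lᵀ) * S)).trace = (msqrt ((X * L)ᵀ * (X * L))).trace := by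
    have h₁ : S * (L * Lᵀ) * S = S * L * (S * L)ᵀ := by
      rw [transpose_mul, hSt]; simp only [Matrix.mul_assoc]
    have h₂ : (S * L)ᵀ * (S * L) = (X * L)ᵀ * (X * L) := by
      rw [transpose_mul, hSt, transpose_mul, Matrix.mul_assoc, ← Matrix.mul_assoc S,
        msqrt_mul_msqrt hX]
      simp only [Matrix.mul_assoc]
    rw [h₁, ← trace_msqrt_transpose_mul_self, h₂]
  rw [BWsq, hcomm]
  ring

lemma BWsq_le_frobSq_sub {n p k : ℕ} (X : Matrix (Fin n) (Fin p) ℝ)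
    {Z : Matrix (Fin n) (Fin k) ℝ} (hZ : Zᵀ * Z = 1) (L : Matrix (Fin p) (Fin k) ℝ) :
    BWsq (Xᵀ * X) (L * Lᵀ) ≤ frobSq (X - Z * Lᵀ) := by
  rw [frobSq_sub_mul_transpose X hZ, BWsq_transpose_mul_self]
  linarith [trace_transpose_mul_le_trace_msqrt hZ (X * L)]

lemma transpose_mul_self_mul_transpose_eq_one {n k : ℕ} {U : Matrix (Fin n) (Fin k) ℝ}
    {V : Matrix (Fin k) (Fin k) ℝ} (hU : Uᵀ * U = 1) (hV : Vᵀ * V = 1) :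
    (U * Vᵀ)ᵀ * (U * Vᵀ) = 1 := by
  rw [transpose_mul, transpose_transpose, Matrix.mul_assoc, ← Matrix.mul_assoc Uᵀ, hU,
    Matrix.one_mul, mul_eq_one_comm.mp hV]

lemma frobSq_sub_polar_mul_transpose {n p k : ℕ} {X : Matrix (Fin n) (Fin p) ℝ}
    {L : Matrix (Fin p) (Fin k) ℝ} {U : Matrix (Fin n) (Fin k) ℝ} {V : Matrix (Fin k) (Fin k) ℝ}
    {d : Fin k → ℝ} (hU : Uᵀ * U = 1) (hV : Vᵀ * V = 1) (hd : ∀ i, 0 ≤ d i)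
    (hSVD : X * L = U * diagonal d * Vᵀ) :
    frobSq (X - (U * Vᵀ) * Lᵀ) = BWsq (Xᵀ * X) (L * Lᵀ) := by
  have hUR : (U * Vᵀ)ᵀ * (X * L) = V * diagonal d * Vᵀ := by
    rw [hSVD, transpose_mul, transpose_transpose]
    simp only [Matrix.mul_assoc]
    rw [← Matrix.mul_assoc Uᵀ, hU, Matrix.one_mul]
  have hsqrt : msqrt ((X * L)ᵀ * (X * L)) = V * diagonal d * Vᵀ := by
    refine msqrt_eq_of_mul_self_eq (posSemidef_mul_diagonal_mul_transpose V hd) ?_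
    rw [hSVD, transpose_mul, transpose_mul, diagonal_transpose, transpose_transpose]
    simp only [Matrix.mul_assoc]
    rw [← Matrix.mul_assoc Vᵀ V, hV, ← Matrix.mul_assoc Uᵀ U, hU, Matrix.one_mul]
  rw [frobSq_sub_mul_transpose X (transpose_mul_self_mul_transpose_eq_one hU hV),
    BWsq_transpose_mul_self, hsqrt, hUR]

theorem stmt9_general {N P K : ℕ}
    (X : Matrix (Fin N) (Fin P) ℝ)
    (pen : Fin K → (Fin P → ℝ) → ℝ)
    (Lhat : Matrix (Fin P) (Fin K) ℝ)
    (hmin : ∀ L : Matrix (Fin P) (Fin K) ℝ,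
      (1/2) * BWsq (X.transpose * X) (Lhat * Lhat.transpose) + ∑ k, pen k (fun p => Lhat p k)
        ≤ (1/2) * BWsq (X.transpose * X) (L * L.transpose) + ∑ k, pen k (fun p => L p k))
    (U : Matrix (Fin N) (Fin K) ℝ) (V : Matrix (Fin K) (Fin K) ℝ) (d : Fin K → ℝ)
    (hU : U.transpose * U = 1)
    (hV : V.transpose * V = 1)
    (hd : ∀ i, 0 ≤ d i)
    (hSVD : X * Lhat = U * Matrix.diagonal d * V.transpose) :
    ((U * V.transpose).transpose * (U * V.transpose) = 1) ∧
    ∀ (Z : Matrix (Fin N) (Fin K) ℝ) (L : Matrix (Fin P) (Fin K) ℝ),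
      Z.transpose * Z = 1 →
      (1/2) * frobSq (X - (U * V.transpose) * Lhat.transpose) + ∑ k, pen k (fun p => Lhat p k)
        ≤ (1/2) * frobSq (X - Z * L.transpose) + ∑ k, pen k (fun p => L p k) := by
  refine ⟨transpose_mul_self_mul_transpose_eq_one hU hV, fun Z L hZ => ?_⟩
  rw [frobSq_sub_polar_mul_transpose hU hV hd hSVD]
  linarith [hmin L, BWsq_le_frobSq_sub X hZ L]

/-- Conversely: if `L̂` minimizes the penalized covariance decomposition criterion, and
`Ẑ = U Vᵀ` is the U factor of the polar decomposition of `X L̂` (given via an SVD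
`X L̂ = U diagonal d Vᵀ`), then `(Ẑ, L̂)` minimizes the penalized PCA criterion. -/
theorem stmt9 {N P K : ℕ} (hKN : K ≤ N) (hKP : K ≤ P)
    (X : Matrix (Fin N) (Fin P) ℝ)
    (pen : Fin K → (Fin P → ℝ) → ℝ)
    (Lhat : Matrix (Fin P) (Fin K) ℝ)
    (hmin : ∀ L : Matrix (Fin P) (Fin K) ℝ,
      (1/2) * BWsq (X.transpose * X) (Lhat * Lhat.transpose) + ∑ k, pen k (fun p => Lhat p k)
        ≤ (1/2) * BWsq (X.transpose * X) (L * L.transpose) + ∑ k, pen k (fun p => L p k))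
    (U : Matrix (Fin N) (Fin K) ℝ) (V : Matrix (Fin K) (Fin K) ℝ) (d : Fin K → ℝ)
    (hU : U.transpose * U = 1)
    (hV : V.transpose * V = 1) (hV' : V * V.transpose = 1)
    (hd : ∀ i, 0 ≤ d i)
    (hSVD : X * Lhat = U * Matrix.diagonal d * V.transpose) :
    ((U * V.transpose).transpose * (U * V.transpose) = 1) ∧
    ∀ (Z : Matrix (Fin N) (Fin K) ℝ) (L : Matrix (Fin P) (Fin K) ℝ),
      Z.transpose * Z = 1 →
      (1/2) * frobSq (X - (U * V.transpose) * Lhat.transpose) + ∑ k, pen k (fun p => Lhat p k)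
        ≤ (1/2) * frobSq (X - Z * L.transpose) + ∑ k, pen k (fun p => L p k) :=
  stmt9_general X pen Lhat hmin U V d hU hV hd hSVD
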